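/- arXiv:1707.07318 — 6 statements merged into one kernel-verified Lean document; each statement's English description precedes it below -/
import Mathlib

section
/- For all natural numbers p and q with 1 ≤ p, 1 ≤ q and p ≠ q, if ω₀(p, q) = 1 then ω₀(q, p ^^^ q) = 1 and ω₀(p ^^^ q, p) = 1 (the quaternion property for the twist of the doubling product P₀). -/
/-- Twist of the Cayley–Dickson doubling product `P₀ : (a,b)(c,d) = (ca − b*d, da* + bc)`. -/
def omega0 (p q : ℕ) : ℤ :=
  if p = 0 ∧ q = 0 then 1
  else if p % 2 = 0 then
    if q % 2 = 0 then omega0 (q / 2) (p / 2)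
    else if 0 < p / 2 then -omega0 (q / 2) (p / 2) else 1
  else
    if q % 2 = 0 then omega0 (p / 2) (q / 2)
    else if 0 < p / 2 then omega0 (p / 2) (q / 2) else -1
termination_by p + q
decreasing_by all_goals omega

/-!
On nonzero distinct indices the twist is anticommutative, `ω₀(q, p) = -ω₀(p, q)`, and
cyclic, `ω₀(q, p ^^^ q) = ω₀(p, q)`. Both follow by strong induction on `p` from the
recursion: the cyclic identity for `(p, q)` reduces to the one for `(p / 2, q / 2)` combined
with anticommutativity, the degenerate cases being settled by `ω₀(0, n) = ω₀(n, 0) = 1` and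
`ω₀(n, n) = -1` for `n ≠ 0`. Applying the cyclic identity to `(p, q)` and then to
`(q, p ^^^ q)` gives both equalities.
-/

namespace Nat

theorem two_mul_xor_two_mul (r s : ℕ) : 2 * r ^^^ 2 * s = 2 * (r ^^^ s) := by
  simpa [bit_val] using xor_bit false r false s

theorem two_mul_xor_two_mul_add_one (r s : ℕ) : 2 * r ^^^ (2 * s + 1) = 2 * (r ^^^ s) + 1 := by
  simpa [bit_val] using xor_bit false r true s

theorem two_mul_add_one_xor_two_mul (r s : ℕ) : (2 * r + 1) ^^^ 2 * s = 2 * (r ^^^ s) + 1 := by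
  simpa [bit_val] using xor_bit true r false s

theorem two_mul_add_one_xor_two_mul_add_one (r s : ℕ) :
    (2 * r + 1) ^^^ (2 * s + 1) = 2 * (r ^^^ s) := by
  simpa [bit_val] using xor_bit true r true s

end Nat

theorem omega0_zero_zero : omega0 0 0 = 1 := by
  rw [omega0]; simp

theorem omega0_two_mul_two_mul (r s : ℕ) : omega0 (2 * r) (2 * s) = omega0 s r := by
  by_cases h : r = 0 ∧ s = 0
  · obtain ⟨rfl, rfl⟩ := h
    rfl
  · rw [omega0, if_neg (by omega)]
    simp

theorem omega0_two_mul_two_mul_add_one (r s : ℕ) :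
    omega0 (2 * r) (2 * s + 1) = if 0 < r then -omega0 s r else 1 := by
  rw [omega0, if_neg (by omega)]
  simp [Nat.add_mod, Nat.add_div]

theorem omega0_two_mul_add_one_two_mul (r s : ℕ) :
    omega0 (2 * r + 1) (2 * s) = omega0 r s := by
  rw [omega0, if_neg (by omega)]
  simp [Nat.add_mod, Nat.add_div]

theorem omega0_two_mul_add_one_two_mul_add_one (r s : ℕ) :
    omega0 (2 * r + 1) (2 * s + 1) = if 0 < r then omega0 r s else -1 := by
  rw [omega0, if_neg (by omega)]
  simp [Nat.add_mod, Nat.add_div]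

theorem omega0_zero_right (n : ℕ) : omega0 n 0 = 1 := by
  induction n using Nat.strong_induction_on with
  | _ n ih =>
  obtain ⟨m, rfl | rfl⟩ := Nat.even_or_odd' n
  · rcases Nat.even_or_odd' m with ⟨k, rfl | rfl⟩
    · rcases eq_or_ne k 0 with rfl | hk
      · exact omega0_zero_zero
      calc omega0 (2 * (2 * k)) (2 * 0) = omega0 (2 * 0) (2 * k) := omega0_two_mul_two_mul _ _
        _ = omega0 k 0 := omega0_two_mul_two_mul _ _
        _ = 1 := ih k (by omega)
    · calc omega0 (2 * (2 * k + 1)) (2 * 0) = omega0 (2 * 0) (2 * k + 1) :=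
            omega0_two_mul_two_mul _ _
        _ = 1 := by simpa using omega0_two_mul_two_mul_add_one 0 k
  · calc omega0 (2 * m + 1) (2 * 0) = omega0 m 0 := omega0_two_mul_add_one_two_mul _ _
      _ = 1 := ih m (by omega)

theorem omega0_zero_left (n : ℕ) : omega0 0 n = 1 := by
  obtain ⟨m, rfl | rfl⟩ := Nat.even_or_odd' n
  · exact (omega0_two_mul_two_mul 0 m).trans (omega0_zero_right m)
  · simpa using omega0_two_mul_two_mul_add_one 0 m

theorem omega0_self {n : ℕ} (hn : n ≠ 0) : omega0 n n = -1 := by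
  induction n using Nat.strong_induction_on with
  | _ n ih =>
  obtain ⟨m, rfl | rfl⟩ := Nat.even_or_odd' n
  · rw [omega0_two_mul_two_mul]
    exact ih m (by omega) (by omega)
  · rw [omega0_two_mul_add_one_two_mul_add_one]
    split_ifs with hm
    · exact ih m (by omega) (by omega)
    · rfl

theorem omega0_swap {p q : ℕ} (hp : p ≠ 0) (hq : q ≠ 0) (hpq : p ≠ q) :
    omega0 q p = -omega0 p q := by
  induction p using Nat.strong_induction_on generalizing q with
  | _ p ih =>
  obtain ⟨r, rfl | rfl⟩ := Nat.even_or_odd' p <;>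
    obtain ⟨s, rfl | rfl⟩ := Nat.even_or_odd' q
  · rw [omega0_two_mul_two_mul, omega0_two_mul_two_mul,
      ih r (by omega) (by omega) (by omega) (by omega), neg_neg]
  · simp [omega0_two_mul_two_mul_add_one, omega0_two_mul_add_one_two_mul, Nat.pos_of_ne_zero,
      show r ≠ 0 by omega]
  · simp [omega0_two_mul_two_mul_add_one, omega0_two_mul_add_one_two_mul, Nat.pos_of_ne_zero,
      show s ≠ 0 by omega]
  · simp only [omega0_two_mul_add_one_two_mul_add_one, Nat.pos_iff_ne_zero]
    rcases eq_or_ne r 0 with rfl | hr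
    · simp [omega0_zero_right, show s ≠ 0 by omega]
    rcases eq_or_ne s 0 with rfl | hs
    · simp [hr, omega0_zero_right]
    simp [hr, hs, ih r (by omega) hr hs (by omega)]

theorem omega0_xor_right_eq {p q : ℕ} (hp : p ≠ 0) (hq : q ≠ 0) (hpq : p ≠ q) :
    omega0 q (p ^^^ q) = omega0 p q := by
  induction p using Nat.strong_induction_on generalizing q with
  | _ p ih =>
  obtain ⟨r, rfl | rfl⟩ := Nat.even_or_odd' p <;>
    obtain ⟨s, rfl | rfl⟩ := Nat.even_or_odd' q
  · have hr : r ≠ 0 := by omega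
    have hs : s ≠ 0 := by omega
    have hrs : r ≠ s := by omega
    have hst : s ≠ r ^^^ s := Ne.symm (xor_right_eq_self_iff.not.mpr hr)
    rw [Nat.two_mul_xor_two_mul, omega0_two_mul_two_mul, omega0_two_mul_two_mul]
    calc omega0 (r ^^^ s) s = -omega0 s (r ^^^ s) :=
          omega0_swap hs (Nat.xor_ne_zero_iff.mpr hrs) hst
      _ = -omega0 r s := by rw [ih r (by omega) hr hs hrs]
      _ = omega0 s r := (omega0_swap hr hs hrs).symm
  · have hr : r ≠ 0 := by omega
    rw [Nat.two_mul_xor_two_mul_add_one, omega0_two_mul_add_one_two_mul_add_one,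
      omega0_two_mul_two_mul_add_one, if_pos (Nat.pos_of_ne_zero hr)]
    rcases eq_or_ne s 0 with rfl | hs
    · simp [omega0_zero_left]
    rcases eq_or_ne r s with rfl | hrs
    · simp [Nat.pos_of_ne_zero hs, omega0_zero_right, omega0_self hs]
    rw [if_pos (Nat.pos_of_ne_zero hs), ih r (by omega) hr hs hrs, omega0_swap hr hs hrs, neg_neg]
  · have hs : s ≠ 0 := by omega
    rw [Nat.two_mul_add_one_xor_two_mul, omega0_two_mul_two_mul_add_one,
      omega0_two_mul_add_one_two_mul, if_pos (Nat.pos_of_ne_zero hs)]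
    rcases eq_or_ne r 0 with rfl | hr
    · simp [omega0_zero_left, omega0_self hs]
    rcases eq_or_ne r s with rfl | hrs
    · simp [omega0_zero_left, omega0_self hs]
    have hst : s ≠ r ^^^ s := Ne.symm (xor_right_eq_self_iff.not.mpr hr)
    rw [omega0_swap hs (Nat.xor_ne_zero_iff.mpr hrs) hst, neg_neg, ih r (by omega) hr hs hrs]
  · have hrs : r ≠ s := by omega
    rw [Nat.two_mul_add_one_xor_two_mul_add_one, omega0_two_mul_add_one_two_mul,
      omega0_two_mul_add_one_two_mul_add_one]
    rcases eq_or_ne r 0 with rfl | hr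
    · simp [omega0_self (Ne.symm hrs)]
    rcases eq_or_ne s 0 with rfl | hs
    · simp [Nat.pos_of_ne_zero hr, omega0_zero_left, omega0_zero_right]
    rw [if_pos (Nat.pos_of_ne_zero hr), ih r (by omega) hr hs hrs]

theorem omega0_xor_left_eq {p q : ℕ} (hp : p ≠ 0) (hq : q ≠ 0) (hpq : p ≠ q) :
    omega0 (p ^^^ q) p = omega0 p q := by
  have hpq' : p ^^^ q ≠ 0 := Nat.xor_ne_zero_iff.mpr hpq
  have hqpq : q ≠ p ^^^ q := Ne.symm (xor_right_eq_self_iff.not.mpr hp)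
  simpa [Nat.xor_comm p q] using
    (omega0_xor_right_eq hq hpq' hqpq).trans (omega0_xor_right_eq hp hq hpq)

/-- The quaternion property for the twist of the doubling product P0. -/
theorem omega0_quaternion_property (p q : ℕ) (hp : 1 ≤ p) (hq : 1 ≤ q) (hpq : p ≠ q)
    (h : omega0 p q = 1) :
    omega0 q (p ^^^ q) = 1 ∧ omega0 (p ^^^ q) p = 1 := by
  have hp₀ : p ≠ 0 := Nat.one_le_iff_ne_zero.mp hp
  have hq₀ : q ≠ 0 := Nat.one_le_iff_ne_zero.mp hq
  exact ⟨(omega0_xor_right_eq hp₀ hq₀ hpq).trans h,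
    (omega0_xor_left_eq hp₀ hq₀ hpq).trans h⟩
end

section
/- For all natural numbers p and q with 1 ≤ p, 1 ≤ q and p ≠ q, if ω₂(p, q) = 1 then ω₂(q, p ^^^ q) = 1 and ω₂(p ^^^ q, p) = 1 (the quaternion property for the twist of the doubling product P₂). -/
def omega2 (p q : ℕ) : ℤ :=
  if p = 0 ∧ q = 0 then 1
  else if p % 2 = 0 then
    if q % 2 = 0 then omega2 (p / 2) (q / 2)
    else if 0 < p / 2 then -omega2 (q / 2) (p / 2) else 1
  else
    if q % 2 = 0 then omega2 (p / 2) (q / 2)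
    else if 0 < p / 2 then omega2 (p / 2) (q / 2) else -1
termination_by p + q
decreasing_by all_goals omega

/-!
Write `p = 2r + a` and `q = 2s + b`. The recursion for `ω₂` reduces each of the identities
`ω₂(q, p) = -ω₂(p, q)` and `ω₂(q, p ^^^ q) = ω₂(p, q)` for distinct nonzero `p, q` either to these
identities for `(r, s)` or to the boundary values `ω₂(0, n) = ω₂(n, 0) = 1` and
`ω₂(n, n) = -1` for `n ≠ 0`, so both hold by induction. The theorem is the second identity applied
to `(p, q)` and then to `(q, p ^^^ q)`, using `q ^^^ (p ^^^ q) = p`.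
-/

theorem omega2_zero_zero : omega2 0 0 = 1 := by
  rw [omega2]; simp

theorem omega2_even_even (r s : ℕ) : omega2 (2 * r) (2 * s) = omega2 r s := by
  rcases eq_or_ne (r + s) 0 with h | h
  · obtain ⟨rfl, rfl⟩ : r = 0 ∧ s = 0 := by omega
    rfl
  · rw [omega2]
    simp [show ¬(r = 0 ∧ s = 0) by omega]

theorem omega2_even_odd (r s : ℕ) :
    omega2 (2 * r) (2 * s + 1) = if 0 < r then -omega2 s r else 1 := by
  rw [omega2]
  simp [Nat.add_mod, Nat.add_div]

theorem omega2_odd_even (r s : ℕ) : omega2 (2 * r + 1) (2 * s) = omega2 r s := by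
  rw [omega2]
  simp [Nat.add_mod, Nat.add_div]

theorem omega2_odd_odd (r s : ℕ) :
    omega2 (2 * r + 1) (2 * s + 1) = if 0 < r then omega2 r s else -1 := by
  rw [omega2]
  simp [Nat.add_mod, Nat.add_div]

theorem Nat.two_mul_xor_two_mul_s2 (r s : ℕ) : (2 * r) ^^^ (2 * s) = 2 * (r ^^^ s) := by
  simpa [Nat.bit_val] using Nat.xor_bit false r false s

theorem Nat.two_mul_xor_two_mul_add_one_s2 (r s : ℕ) :
    (2 * r) ^^^ (2 * s + 1) = 2 * (r ^^^ s) + 1 := by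
  simpa [Nat.bit_val] using Nat.xor_bit false r true s

theorem Nat.two_mul_add_one_xor_two_mul_s2 (r s : ℕ) :
    (2 * r + 1) ^^^ (2 * s) = 2 * (r ^^^ s) + 1 := by
  simpa [Nat.bit_val] using Nat.xor_bit true r false s

theorem Nat.two_mul_add_one_xor_two_mul_add_one_s2 (r s : ℕ) :
    (2 * r + 1) ^^^ (2 * s + 1) = 2 * (r ^^^ s) := by
  simpa [Nat.bit_val] using Nat.xor_bit true r true s

theorem omega2_zero_left (q : ℕ) : omega2 0 q = 1 := by
  induction q using Nat.evenOddRec with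
  | h0 => exact omega2_zero_zero
  | h_even s ih => simpa [omega2_even_even 0 s] using ih
  | h_odd s _ => simpa using omega2_even_odd 0 s

theorem omega2_zero_right (p : ℕ) : omega2 p 0 = 1 := by
  induction p using Nat.evenOddRec with
  | h0 => exact omega2_zero_zero
  | h_even r ih => rwa [← omega2_even_even r 0] at ih
  | h_odd r ih => rwa [← omega2_odd_even r 0] at ih

theorem omega2_self {p : ℕ} (hp : 0 < p) : omega2 p p = -1 := by
  induction p using Nat.evenOddRec with
  | h0 => contradiction
  | h_even r ih => rw [omega2_even_even, ih (by omega)]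
  | h_odd r ih =>
    rw [omega2_odd_odd]
    rcases Nat.eq_zero_or_pos r with rfl | hr
    · rfl
    · rw [if_pos hr, ih hr]

theorem Nat.ne_xor_self_of_pos {p q : ℕ} (hp : 0 < p) : q ≠ p ^^^ q :=
  fun h => hp.ne' (xor_right_eq_self_iff.mp h.symm)

theorem omega2_swap {p q : ℕ} (hp : 0 < p) (hq : 0 < q) (hpq : p ≠ q) :
    omega2 q p = -omega2 p q := by
  obtain ⟨r, rfl | rfl⟩ := Nat.even_or_odd' p <;> obtain ⟨s, rfl | rfl⟩ := Nat.even_or_odd' q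
  · rw [omega2_even_even, omega2_even_even, omega2_swap (by omega) (by omega) (by omega)]
  · rw [omega2_odd_even, omega2_even_odd, if_pos (by omega), neg_neg]
  · rw [omega2_even_odd, omega2_odd_even, if_pos (by omega)]
  · rw [omega2_odd_odd, omega2_odd_odd]
    rcases Nat.eq_zero_or_pos r with rfl | hr <;> rcases Nat.eq_zero_or_pos s with rfl | hs
    · omega
    · simp [hs, omega2_zero_right]
    · simp [hr, omega2_zero_right]
    · simp [hr, hs, omega2_swap hr hs (by omega)]
termination_by p

theorem omega2_xor_cycle {p q : ℕ} (hp : 0 < p) (hq : 0 < q) (hpq : p ≠ q) :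
    omega2 q (p ^^^ q) = omega2 p q := by
  obtain ⟨r, rfl | rfl⟩ := Nat.even_or_odd' p <;> obtain ⟨s, rfl | rfl⟩ := Nat.even_or_odd' q
  · rw [Nat.two_mul_xor_two_mul_s2, omega2_even_even, omega2_even_even,
      omega2_xor_cycle (by omega) (by omega) (by omega)]
  · have hr : 0 < r := by omega
    rw [Nat.two_mul_xor_two_mul_add_one_s2, omega2_even_odd, if_pos hr, omega2_odd_odd]
    rcases Nat.eq_zero_or_pos s with rfl | hs
    · simp [omega2_zero_left]
    rcases eq_or_ne r s with rfl | hrs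
    · simp [hr, omega2_zero_right, omega2_self hr]
    · rw [if_pos hs, omega2_xor_cycle hr hs hrs, omega2_swap hr hs hrs, neg_neg]
  · have hs : 0 < s := by omega
    rw [Nat.two_mul_add_one_xor_two_mul_s2, omega2_even_odd, omega2_odd_even, if_pos hs]
    rcases Nat.eq_zero_or_pos r with rfl | hr
    · simp [omega2_zero_left, omega2_self hs]
    rcases eq_or_ne r s with rfl | hrs
    · simp [omega2_zero_left, omega2_self hr]
    · have hxor : 0 < r ^^^ s := Nat.pos_of_ne_zero (Nat.xor_ne_zero_iff.mpr hrs)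
      rw [omega2_swap hs hxor (Nat.ne_xor_self_of_pos hr), omega2_xor_cycle hr hs hrs, neg_neg]
  · have hrs : r ≠ s := by omega
    rw [Nat.two_mul_add_one_xor_two_mul_add_one_s2, omega2_odd_even, omega2_odd_odd]
    rcases Nat.eq_zero_or_pos r with rfl | hr
    · simp [omega2_self (show 0 < s by omega)]
    rcases Nat.eq_zero_or_pos s with rfl | hs
    · simp [hr, omega2_zero_left, omega2_zero_right]
    · rw [if_pos hr, omega2_xor_cycle hr hs hrs]
termination_by p

/-- The quaternion property for the twist of the doubling product P2. -/
theorem omega2_quaternion_property (p q : ℕ) (hp : 1 ≤ p) (hq : 1 ≤ q) (hpq : p ≠ q)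
    (h : omega2 p q = 1) :
    omega2 q (p ^^^ q) = 1 ∧ omega2 (p ^^^ q) p = 1 := by
  have hcycle : omega2 q (p ^^^ q) = omega2 p q := omega2_xor_cycle hp hq hpq
  have hxor : 0 < p ^^^ q := Nat.pos_of_ne_zero (Nat.xor_ne_zero_iff.mpr hpq)
  refine ⟨hcycle.trans h, ?_⟩
  calc omega2 (p ^^^ q) p
      = omega2 (p ^^^ q) (q ^^^ (p ^^^ q)) := by rw [Nat.xor_comm p q, Nat.xor_xor_cancel_left]
    _ = omega2 q (p ^^^ q) := omega2_xor_cycle hq hxor (Nat.ne_xor_self_of_pos hp)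
    _ = 1 := hcycle.trans h
end

section
/- Each of the four transposed twists satisfies the quaternion property: for every ω among ω₀*, ω₁*, ω₂*, ω₃* and all natural numbers p, q with 1 ≤ p, 1 ≤ q and p ≠ q, if ω(p, q) = 1 then ω(q, p ^^^ q) = 1 and ω(p ^^^ q, p) = 1. -/
/-- Twist of the transposed doubling product `P₀ᵗ : (a,b)(c,d) = (ca − bd*, ad + c*b)`. -/
def omega0t (p q : ℕ) : ℤ :=
  if p = 0 ∧ q = 0 then 1
  else if p % 2 = 0 then
    if q % 2 = 0 then omega0t (q / 2) (p / 2)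
    else omega0t (p / 2) (q / 2)
  else
    if q % 2 = 0 then
      if 0 < q / 2 then -omega0t (q / 2) (p / 2) else 1
    else if 0 < q / 2 then omega0t (p / 2) (q / 2) else -1
termination_by p + q
decreasing_by all_goals omega

/-- Twist of the transposed doubling product `P₁ᵗ : (a,b)(c,d) = (ca − d*b, da + bc*)`. -/
def omega1t (p q : ℕ) : ℤ :=
  if p = 0 ∧ q = 0 then 1
  else if p % 2 = 0 then
    if q % 2 = 0 then omega1t (q / 2) (p / 2)
    else omega1t (q / 2) (p / 2)
  else
    if q % 2 = 0 then
      if 0 < q / 2 then -omega1t (p / 2) (q / 2) else 1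
    else if 0 < q / 2 then omega1t (q / 2) (p / 2) else -1
termination_by p + q
decreasing_by all_goals omega

/-- Twist of the transposed doubling product `P₂ᵗ : (a,b)(c,d) = (ac − bd*, ad + c*b)`. -/
def omega2t (p q : ℕ) : ℤ :=
  if p = 0 ∧ q = 0 then 1
  else if p % 2 = 0 then
    if q % 2 = 0 then omega2t (p / 2) (q / 2)
    else omega2t (p / 2) (q / 2)
  else
    if q % 2 = 0 then
      if 0 < q / 2 then -omega2t (q / 2) (p / 2) else 1
    else if 0 < q / 2 then omega2t (p / 2) (q / 2) else -1
termination_by p + q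
decreasing_by all_goals omega

/-- Twist of the transposed doubling product `P₃ᵗ : (a,b)(c,d) = (ac − d*b, da + bc*)`. -/
def omega3t (p q : ℕ) : ℤ :=
  if p = 0 ∧ q = 0 then 1
  else if p % 2 = 0 then
    if q % 2 = 0 then omega3t (p / 2) (q / 2)
    else omega3t (q / 2) (p / 2)
  else
    if q % 2 = 0 then
      if 0 < q / 2 then -omega3t (p / 2) (q / 2) else 1
    else if 0 < q / 2 then omega3t (q / 2) (p / 2) else -1
termination_by p + q
decreasing_by all_goals omega

def QuaternionRelations (ω : ℕ → ℕ → ℤ) (p q : ℕ) : Prop :=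
  ω q (p ^^^ q) = ω p q ∧ ω (p ^^^ q) p = ω p q ∧ ω q p = -ω p q

theorem QuaternionRelations.values {ω : ℕ → ℕ → ℤ} {r s : ℕ} (h : QuaternionRelations ω r s)
    (h' : QuaternionRelations ω s r) :
    ω s r = -ω r s ∧ ω s (r ^^^ s) = ω r s ∧ ω (r ^^^ s) r = ω r s ∧
      ω r (r ^^^ s) = -ω r s ∧ ω (r ^^^ s) s = -ω r s := by
  obtain ⟨h₁, h₂, h₃⟩ := h
  obtain ⟨h₄, h₅, -⟩ := h'
  rw [Nat.xor_comm s r, h₃] at h₄ h₅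
  exact ⟨h₃, h₁, h₂, h₄, h₅⟩

/-- The recursion shared by the four transposed twists: `swapEven` records whether the halves are
exchanged in the even–even case, `swapOdd` whether they are exchanged in the other three cases. -/
structure IsTransposedTwist (swapEven swapOdd : Bool) (ω : ℕ → ℕ → ℤ) : Prop where
  zero_zero : ω 0 0 = 1
  even_even (r s : ℕ) : ω (2 * r) (2 * s) = if swapEven then ω s r else ω r s
  even_odd (r s : ℕ) : ω (2 * r) (2 * s + 1) = if swapOdd then ω s r else ω r s
  odd_even (r s : ℕ) :
    ω (2 * r + 1) (2 * s) = if 0 < s then -(if swapOdd then ω r s else ω s r) else 1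
  odd_odd (r s : ℕ) :
    ω (2 * r + 1) (2 * s + 1) = if 0 < s then (if swapOdd then ω s r else ω r s) else -1

namespace IsTransposedTwist

variable {swapEven swapOdd : Bool} {ω : ℕ → ℕ → ℤ}

theorem of_unfold
    (hω : ∀ p q, ω p q =
      if p = 0 ∧ q = 0 then 1
      else if p % 2 = 0 then
        if q % 2 = 0 then (if swapEven then ω (q / 2) (p / 2) else ω (p / 2) (q / 2))
        else (if swapOdd then ω (q / 2) (p / 2) else ω (p / 2) (q / 2))
      else if q % 2 = 0 then
        if 0 < q / 2 then -(if swapOdd then ω (p / 2) (q / 2) else ω (q / 2) (p / 2)) else 1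
      else if 0 < q / 2 then (if swapOdd then ω (q / 2) (p / 2) else ω (p / 2) (q / 2))
      else -1) :
    IsTransposedTwist swapEven swapOdd ω where
  zero_zero := by rw [hω]; simp
  even_even r s := by
    rcases Nat.eq_zero_or_pos (r + s) with h | h
    · obtain ⟨rfl, rfl⟩ : r = 0 ∧ s = 0 := by omega
      exact (ite_self _).symm
    · rw [hω, if_neg (by omega)]; simp
  even_odd r s := by rw [hω]; simp [Nat.mul_add_div]
  odd_even r s := by rw [hω]; simp [Nat.mul_add_div]
  odd_odd r s := by rw [hω]; simp [Nat.mul_add_div]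

theorem apply_zero_right_and_apply_zero_left (h : IsTransposedTwist swapEven swapOdd ω) (m : ℕ) :
    ω m 0 = 1 ∧ ω 0 m = 1 := by
  induction m using Nat.strong_induction_on with
  | _ m ih =>
  obtain ⟨k, rfl | rfl⟩ := Nat.even_or_odd' m
  · rcases Nat.eq_zero_or_pos k with rfl | hk
    · exact ⟨h.zero_zero, h.zero_zero⟩
    obtain ⟨ih₁, ih₂⟩ := ih k (by omega)
    exact ⟨by simpa [ih₁, ih₂] using h.even_even k 0,
      by simpa [ih₁, ih₂] using h.even_even 0 k⟩
  · obtain ⟨ih₁, ih₂⟩ := ih k (by omega)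
    exact ⟨by simpa using h.odd_even k 0, by simpa [ih₁, ih₂] using h.even_odd 0 k⟩

theorem apply_zero_right (h : IsTransposedTwist swapEven swapOdd ω) (m : ℕ) : ω m 0 = 1 :=
  (h.apply_zero_right_and_apply_zero_left m).1

theorem apply_zero_left (h : IsTransposedTwist swapEven swapOdd ω) (m : ℕ) : ω 0 m = 1 :=
  (h.apply_zero_right_and_apply_zero_left m).2

theorem apply_self (h : IsTransposedTwist swapEven swapOdd ω) {m : ℕ} (hm : m ≠ 0) :
    ω m m = -1 := by
  induction m using Nat.strong_induction_on with
  | _ m ih =>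
  obtain ⟨k, rfl | rfl⟩ := Nat.even_or_odd' m
  · simp [h.even_even, ih k (by omega) (by omega)]
  · rcases Nat.eq_zero_or_pos k with rfl | hk
    · simpa using h.odd_odd 0 0
    · simp [h.odd_odd, hk, ih k (by omega) (by omega)]

theorem quaternionRelations_of_div_two (h : IsTransposedTwist swapEven swapOdd ω) {p q : ℕ}
    (hp : p ≠ 0) (hq : q ≠ 0) (hpq : p ≠ q)
    (ih : p / 2 ≠ 0 → q / 2 ≠ 0 → p / 2 ≠ q / 2 →
      QuaternionRelations ω (p / 2) (q / 2) ∧ QuaternionRelations ω (q / 2) (p / 2)) :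
    QuaternionRelations ω p q := by
  obtain ⟨r, rfl | rfl⟩ := Nat.even_or_odd' p <;> obtain ⟨s, rfl | rfl⟩ := Nat.even_or_odd' q
  all_goals
    simp only [Nat.mul_add_div two_pos, Nat.mul_div_cancel_left _ two_pos, Nat.reduceDiv,
      add_zero] at ih
    simp only [QuaternionRelations, Nat.two_mul_xor_two_mul, Nat.two_mul_xor_two_mul_add_one,
      Nat.two_mul_add_one_xor_two_mul, Nat.two_mul_add_one_xor_two_mul_add_one,
      h.even_even, h.even_odd, h.odd_even, h.odd_odd]
    by_cases hd : r = 0 ∨ s = 0 ∨ r = s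
    · rcases hd with rfl | rfl | rfl <;>
        simp_all [h.apply_self, h.apply_zero_left, h.apply_zero_right, Nat.pos_iff_ne_zero]
    push Not at hd
    obtain ⟨hr, hs, hrs⟩ := hd
    obtain ⟨h₁, h₂, h₃, h₄, h₅⟩ := QuaternionRelations.values (ih hr hs hrs).1 (ih hr hs hrs).2
    simp only [Nat.pos_of_ne_zero hr, Nat.pos_of_ne_zero hs,
      Nat.pos_of_ne_zero (Nat.xor_ne_zero_iff.2 hrs), h₁, h₂, h₃, h₄, h₅, if_true]
    split_ifs <;> simp

theorem quaternionRelations (h : IsTransposedTwist swapEven swapOdd ω) {p q : ℕ}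
    (hp : p ≠ 0) (hq : q ≠ 0) (hpq : p ≠ q) : QuaternionRelations ω p q := by
  induction hn : p + q using Nat.strong_induction_on generalizing p q with
  | _ n ih =>
  refine h.quaternionRelations_of_div_two hp hq hpq fun hr hs hrs => ⟨?_, ?_⟩
  · exact ih _ (by omega) hr hs hrs rfl
  · exact ih _ (by omega) hs hr hrs.symm rfl

end IsTransposedTwist

theorem isTransposedTwist_omega0t : IsTransposedTwist true false omega0t :=
  .of_unfold fun p q => by rw [omega0t.eq_def]; rfl

theorem isTransposedTwist_omega1t : IsTransposedTwist true true omega1t :=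
  .of_unfold fun p q => by rw [omega1t.eq_def]; rfl

theorem isTransposedTwist_omega2t : IsTransposedTwist false false omega2t :=
  .of_unfold fun p q => by rw [omega2t.eq_def]; rfl

theorem isTransposedTwist_omega3t : IsTransposedTwist false true omega3t :=
  .of_unfold fun p q => by rw [omega3t.eq_def]; rfl

/-- Each of the four transposed Cayley–Dickson twists satisfies the quaternion property. -/
theorem transposed_twists_quaternion_property :
    ∀ ω : ℕ → ℕ → ℤ, ω ∈ [omega0t, omega1t, omega2t, omega3t] →
      ∀ p q : ℕ, 1 ≤ p → 1 ≤ q → p ≠ q → ω p q = 1 →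
        ω q (p ^^^ q) = 1 ∧ ω (p ^^^ q) p = 1 := by
  intro ω hω p q hp hq hpq hωpq
  obtain ⟨swapEven, swapOdd, h⟩ : ∃ swapEven swapOdd, IsTransposedTwist swapEven swapOdd ω := by
    simp only [List.mem_cons, List.not_mem_nil, or_false] at hω
    rcases hω with rfl | rfl | rfl | rfl
    exacts [⟨_, _, isTransposedTwist_omega0t⟩, ⟨_, _, isTransposedTwist_omega1t⟩,
      ⟨_, _, isTransposedTwist_omega2t⟩, ⟨_, _, isTransposedTwist_omega3t⟩]
  obtain ⟨hcyc₁, hcyc₂, -⟩ := h.quaternionRelations (by omega) (by omega) hpq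
  exact ⟨hcyc₁.trans hωpq, hcyc₂.trans hωpq⟩
end

section
/- The twist table of each transposed doubling product is the transpose of the twist table of the corresponding plain product: for all natural numbers p and q, ω₀*(p, q) = ω₀(q, p), ω₁*(p, q) = ω₁(q, p), ω₂*(p, q) = ω₂(q, p), and ω₃*(p, q) = ω₃(q, p). -/
/-- Twist of the Cayley–Dickson doubling product `P₁ : (a,b)(c,d) = (ca − db*, a*d + cb)`. -/
def omega1 (p q : ℕ) : ℤ :=
  if p = 0 ∧ q = 0 then 1
  else if p % 2 = 0 then
    if q % 2 = 0 then omega1 (q / 2) (p / 2)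
    else if 0 < p / 2 then -omega1 (p / 2) (q / 2) else 1
  else
    if q % 2 = 0 then omega1 (q / 2) (p / 2)
    else if 0 < p / 2 then omega1 (q / 2) (p / 2) else -1
termination_by p + q
decreasing_by all_goals omega

/-- Twist of the Cayley–Dickson doubling product `P₃ : (a,b)(c,d) = (ac − db*, a*d + cb)`. -/
def omega3 (p q : ℕ) : ℤ :=
  if p = 0 ∧ q = 0 then 1
  else if p % 2 = 0 then
    if q % 2 = 0 then omega3 (p / 2) (q / 2)
    else if 0 < p / 2 then -omega3 (p / 2) (q / 2) else 1
  else
    if q % 2 = 0 then omega3 (q / 2) (p / 2)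
    else if 0 < p / 2 then omega3 (q / 2) (p / 2) else -1
termination_by p + q
decreasing_by all_goals omega

/-! Each transposed recursion is the plain one with the two arguments exchanged: in every branch the
parity tests, the guard `0 < q / 2` against `0 < p / 2`, and the order of the arguments of the recursive
call correspond. Hence induction along the recursion of the transposed twist, unfolding both sides once,
lands in matching branches whose recursive calls are related by the induction hypothesis. -/

theorem omega0t_eq_omega0_swap (p q : ℕ) : omega0t p q = omega0 q p := by
  induction p, q using omega0t.induct <;> rw [omega0t, omega0] <;> split_ifs <;> simp_all

theorem omega1t_eq_omega1_swap (p q : ℕ) : omega1t p q = omega1 q p := by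
  induction p, q using omega1t.induct <;> rw [omega1t, omega1] <;> split_ifs <;> simp_all

theorem omega2t_eq_omega2_swap (p q : ℕ) : omega2t p q = omega2 q p := by
  induction p, q using omega2t.induct <;> rw [omega2t, omega2] <;> split_ifs <;> simp_all

theorem omega3t_eq_omega3_swap (p q : ℕ) : omega3t p q = omega3 q p := by
  induction p, q using omega3t.induct <;> rw [omega3t, omega3] <;> split_ifs <;> simp_all

/-- The twist table of each transposed doubling product is the transpose of the twist
table of the corresponding plain product. -/
theorem transposed_twists_are_transposes (p q : ℕ) :
    omega0t p q = omega0 q p ∧ omega1t p q = omega1 q p ∧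
    omega2t p q = omega2 q p ∧ omega3t p q = omega3 q p :=
  ⟨omega0t_eq_omega0_swap p q, omega1t_eq_omega1_swap p q,
    omega2t_eq_omega2_swap p q, omega3t_eq_omega3_swap p q⟩
end

section
/- Octonion Fano-plane characterization for P₂: for all natural numbers p, q with 1 ≤ p ≤ 7 and 1 ≤ q ≤ 7, ω₂(p, q) = 1 if and only if the ordered pair (p, q) belongs to the set {(1,2),(2,3),(3,1),(1,4),(4,5),(5,1),(1,6),(6,7),(7,1),(2,4),(4,6),(6,2),(7,2),(2,5),(5,7),(5,6),(6,3),(3,5),(3,4),(4,7),(7,3)} (i.e. the quaternion triples of the octonions under P₂ are exactly (1,2,3), (1,4,5), (1,6,7), (2,4,6), (7,2,5), (5,6,3), (3,4,7)). -/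
/-- The recursion of `omega2` run on a step budget instead of well-founded recursion, so that
`decide` can evaluate it in the kernel. -/
def omega2Fuel : ℕ → ℕ → ℕ → ℤ
  | 0, _, _ => 1
  | n + 1, p, q =>
    if p = 0 ∧ q = 0 then 1
    else if p % 2 = 0 then
      if q % 2 = 0 then omega2Fuel n (p / 2) (q / 2)
      else if 0 < p / 2 then -omega2Fuel n (q / 2) (p / 2) else 1
    else
      if q % 2 = 0 then omega2Fuel n (p / 2) (q / 2)
      else if 0 < p / 2 then omega2Fuel n (p / 2) (q / 2) else -1

theorem omega2Fuel_eq_omega2 {n p q : ℕ} (h : p + q < n) : omega2Fuel n p q = omega2 p q := by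
  induction n generalizing p q with
  | zero => omega
  | succ n ih =>
    rw [omega2Fuel, omega2]
    split_ifs <;> first | rfl | (rw [ih]; omega)

/-- Octonion Fano-plane characterization for the doubling product P₂. -/
theorem omega2_octonion_fano (p q : ℕ) (hp1 : 1 ≤ p) (hp7 : p ≤ 7) (hq1 : 1 ≤ q) (hq7 : q ≤ 7) :
    omega2 p q = 1 ↔
      (p, q) ∈ ({(1,2),(2,3),(3,1),(1,4),(4,5),(5,1),(1,6),(6,7),(7,1),(2,4),(4,6),(6,2),(7,2),(2,5),(5,7),(5,6),(6,3),(3,5),(3,4),(4,7),(7,3)} : Set (ℕ × ℕ)) := by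
  rw [← omega2Fuel_eq_omega2 (n := 15) (by omega)]
  interval_cases p <;> interval_cases q <;> decide
end

section
/- Cyclic permutations preserving the octonion triples: let σ₀ : ℕ → ℕ be the 7-cycle with σ₀(1)=2, σ₀(2)=6, σ₀(6)=3, σ₀(3)=4, σ₀(4)=5, σ₀(5)=7, σ₀(7)=1, and let σ₃ : ℕ → ℕ be the 7-cycle with σ₃(1)=2, σ₃(2)=4, σ₃(4)=3, σ₃(3)=6, σ₃(6)=7, σ₃(7)=5, σ₃(5)=1. Then for all p, q with 1 ≤ p ≤ 7, 1 ≤ q ≤ 7: if ω₀(p, q) = 1 then ω₀(σ₀(p), σ₀(q)) = 1, and if ω₃(p, q) = 1 then ω₃(σ₃(p), σ₃(q)) = 1. -/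
/-- The 7-cycle (1 2 6 3 4 5 7) on the imaginary octonion units, fixing all other
natural numbers. -/
def sigma0 : ℕ → ℕ
  | 1 => 2
  | 2 => 6
  | 6 => 3
  | 3 => 4
  | 4 => 5
  | 5 => 7
  | 7 => 1
  | n => n

/-- The 7-cycle (1 2 4 3 6 7 5) on the imaginary octonion units, fixing all other
natural numbers. -/
def sigma3 : ℕ → ℕ
  | 1 => 2
  | 2 => 4
  | 4 => 3
  | 3 => 6
  | 6 => 7
  | 7 => 5
  | 5 => 1
  | n => n

/-! For `1 ≤ p, q ≤ 7` one has `ω(p, q) = 1` exactly when `(p, q, p XOR q)` is a cyclic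
rotation of one of seven oriented triples, the oriented lines of a Fano plane on the imaginary
units. So the claim reduces to checking that each cycle permutes the oriented lines of its
product. -/

def orientedEdges (T : List (ℕ × ℕ × ℕ)) : List (ℕ × ℕ) :=
  T.flatMap fun (a, b, c) => [(a, b), (b, c), (c, a)]

def octonionTriples0 : List (ℕ × ℕ × ℕ) :=
  [(1, 2, 3), (1, 4, 5), (1, 6, 7), (2, 5, 7), (2, 6, 4), (3, 4, 7), (3, 5, 6)]

def octonionTriples3 : List (ℕ × ℕ × ℕ) :=
  [(1, 2, 3), (1, 4, 5), (1, 6, 7), (2, 4, 6), (2, 7, 5), (3, 6, 5), (3, 7, 4)]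

theorem omega0_eq_one_iff {p q : ℕ} (hp : p ∈ Finset.Icc 1 7) (hq : q ∈ Finset.Icc 1 7) :
    omega0 p q = 1 ↔ (p, q) ∈ orientedEdges octonionTriples0 := by
  obtain ⟨hp1, hp7⟩ := Finset.mem_Icc.1 hp
  obtain ⟨hq1, hq7⟩ := Finset.mem_Icc.1 hq
  interval_cases p <;> interval_cases q <;> simp [omega0, orientedEdges, octonionTriples0]

theorem omega3_eq_one_iff {p q : ℕ} (hp : p ∈ Finset.Icc 1 7) (hq : q ∈ Finset.Icc 1 7) :
    omega3 p q = 1 ↔ (p, q) ∈ orientedEdges octonionTriples3 := by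
  obtain ⟨hp1, hp7⟩ := Finset.mem_Icc.1 hp
  obtain ⟨hq1, hq7⟩ := Finset.mem_Icc.1 hq
  interval_cases p <;> interval_cases q <;> simp [omega3, orientedEdges, octonionTriples3]

theorem sigma0_mem_Icc : ∀ p ∈ Finset.Icc 1 7, sigma0 p ∈ Finset.Icc 1 7 := by
  decide

theorem sigma3_mem_Icc : ∀ p ∈ Finset.Icc 1 7, sigma3 p ∈ Finset.Icc 1 7 := by
  decide

theorem sigma0_pair_mem_orientedEdges :
    ∀ e ∈ orientedEdges octonionTriples0,
      (sigma0 e.1, sigma0 e.2) ∈ orientedEdges octonionTriples0 := by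
  decide

theorem sigma3_pair_mem_orientedEdges :
    ∀ e ∈ orientedEdges octonionTriples3,
      (sigma3 e.1, sigma3 e.2) ∈ orientedEdges octonionTriples3 := by
  decide

/-- The 7-cycles `sigma0` and `sigma3` preserve the octonion structure-constant triples of
the doubling products P₀ and P₃ respectively. -/
theorem cycles_preserve_octonion_triples (p q : ℕ)
    (hp1 : 1 ≤ p) (hp7 : p ≤ 7) (hq1 : 1 ≤ q) (hq7 : q ≤ 7) :
    (omega0 p q = 1 → omega0 (sigma0 p) (sigma0 q) = 1) ∧
    (omega3 p q = 1 → omega3 (sigma3 p) (sigma3 q) = 1) := by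
  have hp : p ∈ Finset.Icc 1 7 := Finset.mem_Icc.2 ⟨hp1, hp7⟩
  have hq : q ∈ Finset.Icc 1 7 := Finset.mem_Icc.2 ⟨hq1, hq7⟩
  constructor
  · rw [omega0_eq_one_iff hp hq, omega0_eq_one_iff (sigma0_mem_Icc p hp) (sigma0_mem_Icc q hq)]
    exact sigma0_pair_mem_orientedEdges (p, q)
  · rw [omega3_eq_one_iff hp hq, omega3_eq_one_iff (sigma3_mem_Icc p hp) (sigma3_mem_Icc q hq)]
    exact sigma3_pair_mem_orientedEdges (p, q)
end
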